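/- arXiv:2102.09292 — 5 statements merged into one kernel-verified Lean document; each statement's English description precedes it below -/
import Mathlib

section
/- Let d ≥ 2 be a real number and let W be the 4×4 symmetric matrix with rows (0, d, 0, d−1), (d, 0, d−1, 0), (0, d−1, 0, 0), (d−1, 0, 0, 0). Then the second largest eigenvalue of W equals (−d + √(4 − 8d + 5d²))/2, and this is strictly positive. -/
/-!
The characteristic polynomial of `W` factors as `(x² - d x - (d-1)²)(x² + d x - (d-1)²)`, so its
roots are `(±d ± s)/2` with `s = √(5d² - 8d + 4)`. For `d ≥ 2` we have `s > d > 0`, hence these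
four roots are distinct, they exhaust the spectrum, and in decreasing order the second one is
`(s - d)/2 > 0`.
-/

open Matrix Polynomial

theorem Matrix.IsHermitian.mem_range_eigenvalues_of_isRoot_charpoly {𝕜 n : Type*} [RCLike 𝕜]
    [Fintype n] [DecidableEq n] {A : Matrix n n 𝕜} (hA : A.IsHermitian) {y : ℝ}
    (hy : A.charpoly.IsRoot (y : 𝕜)) : y ∈ Set.range hA.eigenvalues := by
  have hroot : (y : 𝕜) ∈ A.charpoly.roots := (mem_roots (charpoly_monic A).ne_zero).mpr hy
  rw [hA.roots_charpoly_eq_eigenvalues] at hroot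
  obtain ⟨i, -, hi⟩ := Multiset.mem_map.mp hroot
  exact ⟨i, RCLike.ofReal_injective hi⟩

theorem Antitone.fin_four_apply_one_eq {α : Type*} [LinearOrder α] {f : Fin 4 → α}
    (hf : Antitone f) {a b c e : α} (hba : b < a) (hcb : c < b) (hec : e < c)
    (ha : a ∈ Set.range f) (hb : b ∈ Set.range f) (hc : c ∈ Set.range f)
    (he : e ∈ Set.range f) : f 1 = b := by
  obtain ⟨ia, rfl⟩ := ha
  obtain ⟨ib, rfl⟩ := hb
  obtain ⟨ic, rfl⟩ := hc
  obtain ⟨ie, rfl⟩ := he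
  have h1 := hf.reflect_lt hba
  have h2 := hf.reflect_lt hcb
  have h3 := hf.reflect_lt hec
  obtain rfl : ib = 1 := by
    rw [Fin.lt_def] at h1 h2 h3
    ext; have := ie.isLt; simp only [Fin.val_one]; omega
  rfl

def W6 (d : ℝ) : Matrix (Fin 4) (Fin 4) ℝ :=
  !![0, d, 0, d - 1; d, 0, d - 1, 0; 0, d - 1, 0, 0; d - 1, 0, 0, 0]

theorem det_scalar_sub_W6 (d x : ℝ) :
    (scalar (Fin 4) x - W6 d).det =
      (x ^ 2 - d * x - (d - 1) ^ 2) * (x ^ 2 + d * x - (d - 1) ^ 2) := by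
  simp [W6, det_succ_row_zero, Fin.sum_univ_succ, Fin.succAbove]
  ring

theorem isRoot_charpoly_W6 {d y : ℝ}
    (hy : (2 * y - d) ^ 2 = 5 * d ^ 2 - 8 * d + 4 ∨ (2 * y + d) ^ 2 = 5 * d ^ 2 - 8 * d + 4) :
    (W6 d).charpoly.IsRoot y := by
  rw [IsRoot, eval_charpoly, det_scalar_sub_W6]
  rcases hy with hy | hy
  · exact mul_eq_zero_of_left (by linear_combination hy / 4) _
  · exact mul_eq_zero_of_right _ (by linear_combination hy / 4)

/-- For real `d ≥ 2`, the symmetric matrix with rows `(0,d,0,d−1), (d,0,d−1,0), (0,d−1,0,0),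
(d−1,0,0,0)` has second largest eigenvalue `(−d + √(4 − 8d + 5d²))/2`, which is strictly
positive. -/
theorem second_eigenvalue_W6 (d : ℝ) (hd : 2 ≤ d)
    (W : Matrix (Fin 4) (Fin 4) ℝ)
    (hWdef : W = !![0, d, 0, d - 1; d, 0, d - 1, 0; 0, d - 1, 0, 0; d - 1, 0, 0, 0])
    (hW : W.IsHermitian)
    (σ : Equiv.Perm (Fin 4)) (hσ : Antitone (hW.eigenvalues ∘ σ)) :
    (hW.eigenvalues ∘ σ) 1 = (-d + Real.sqrt (4 - 8 * d + 5 * d ^ 2)) / 2 ∧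
      0 < (hW.eigenvalues ∘ σ) 1 := by
  set s := Real.sqrt (4 - 8 * d + 5 * d ^ 2)
  have hs : s ^ 2 = 5 * d ^ 2 - 8 * d + 4 := by
    rw [Real.sq_sqrt (by nlinarith)]; ring
  have hds : d < s := by nlinarith [Real.sqrt_nonneg (4 - 8 * d + 5 * d ^ 2)]
  have mem : ∀ y, (W6 d).charpoly.IsRoot y → y ∈ Set.range (hW.eigenvalues ∘ σ) := by
    intro y hy
    subst hWdef
    rw [EquivLike.range_comp]
    exact hW.mem_range_eigenvalues_of_isRoot_charpoly hy
  have hsecond := hσ.fin_four_apply_one_eq (a := (d + s) / 2) (b := (-d + s) / 2)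
    (c := (d - s) / 2) (e := (-d - s) / 2) (by linarith) (by linarith) (by linarith)
    (mem _ (isRoot_charpoly_W6 (.inl (by linear_combination hs))))
    (mem _ (isRoot_charpoly_W6 (.inr (by linear_combination hs))))
    (mem _ (isRoot_charpoly_W6 (.inl (by linear_combination hs))))
    (mem _ (isRoot_charpoly_W6 (.inr (by linear_combination hs))))
  exact ⟨hsecond, by rw [hsecond]; linarith⟩
end

section
/- If G is a connected graph with exactly one positive anti-adjacency eigenvalue, then the diameter of G is at most 2. -/
noncomputable def ecc {V : Type*} [Fintype V] (G : SimpleGraph V) (u : V) : ℕ :=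
  Finset.univ.sup (G.dist u)

/-- The anti-adjacency (eccentricity) matrix of a graph: the `(u,v)` entry is `d_G(u,v)`
if `d_G(u,v) = min (ε_G(u)) (ε_G(v))`, and `0` otherwise. -/
noncomputable def antiAdj {V : Type*} [Fintype V] (G : SimpleGraph V) : Matrix V V ℝ :=
  Matrix.of fun u v =>
    if G.dist u v = min (ecc G u) (ecc G v) then (G.dist u v : ℝ) else 0

/-!
A symmetric matrix with at most one positive eigenvalue has a negative semidefinite quadratic
form `Q` on a hyperplane, and this yields the reverse Cauchy–Schwarz inequality
`Q(y₁) Q(y₂) ≤ B(y₁, y₂)²` whenever `Q(y₁) > 0`. Tested on sums of basis vectors, it rules out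
two disjoint "heavy" pairs with small cross terms, and a heavy triangle with a heavy pendant edge.

Let the largest eccentricity be `d ≥ 3`, attained by `u, v` with `d(u, v) = d`, and let `x`, `y`
be the neighbours of `u`, `v` on geodesics from `u` to `v` and back. If `ε(x) = d`, a vertex `w`
with `d(x, w) = d` makes `{u, v, x, w}` one of the forbidden patterns. Hence
`ε(x) = ε(y) = d - 1`, and then `{u, v, x, y}` is forbidden: the pairs `{u, v}`, `{x, y}` if
`d(x, y) = d - 1`, the pairs `{u, y}`, `{v, x}` otherwise.
-/

open Matrix

namespace Matrix.IsHermitian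

variable {n : Type*} [Fintype n] {A : Matrix n n ℝ}

lemma dotProduct_mulVec_comm (hA : A.IsHermitian) (x y : n → ℝ) :
    y ⬝ᵥ A *ᵥ x = x ⬝ᵥ A *ᵥ y := by
  rw [dotProduct_mulVec, ← mulVec_transpose, isHermitian_iff_isSymm.mp hA, dotProduct_comm]

variable [DecidableEq n]

lemma dotProduct_mulVec_self_eq_sum (hA : A.IsHermitian) (z : n → ℝ) :
    z ⬝ᵥ A *ᵥ z =
      ∑ i, hA.eigenvalues i * inner ℝ (hA.eigenvectorBasis i) (WithLp.toLp 2 z) ^ 2 := by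
  set b := hA.eigenvectorBasis
  have hAb : ∀ i, inner ℝ (b i) (WithLp.toLp 2 (A *ᵥ z)) =
      hA.eigenvalues i * inner ℝ (b i) (WithLp.toLp 2 z) := fun i => by
    simp only [EuclideanSpace.inner_eq_star_dotProduct, star_trivial]
    rw [dotProduct_comm, hA.dotProduct_mulVec_comm, hA.mulVec_eigenvectorBasis, dotProduct_smul,
      smul_eq_mul]
  calc z ⬝ᵥ A *ᵥ z = inner ℝ (WithLp.toLp 2 z) (WithLp.toLp 2 (A *ᵥ z)) := by
        rw [EuclideanSpace.inner_toLp_toLp, star_trivial, dotProduct_comm]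
    _ = ∑ i, inner ℝ (WithLp.toLp 2 z) (b i) * inner ℝ (b i) (WithLp.toLp 2 (A *ᵥ z)) :=
        (b.sum_inner_mul_inner _ _).symm
    _ = _ := Finset.sum_congr rfl fun i _ => by rw [hAb, real_inner_comm]; ring

lemma dotProduct_mulVec_self_nonpos_of_inner_eq_zero (hA : A.IsHermitian) {z : n → ℝ}
    (hz : ∀ i, 0 < hA.eigenvalues i → inner ℝ (hA.eigenvectorBasis i) (WithLp.toLp 2 z) = 0) :
    z ⬝ᵥ A *ᵥ z ≤ 0 := by
  rw [hA.dotProduct_mulVec_self_eq_sum]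
  refine Finset.sum_nonpos fun i _ => ?_
  rcases le_or_gt (hA.eigenvalues i) 0 with hi | hi
  · exact mul_nonpos_of_nonpos_of_nonneg hi (sq_nonneg _)
  · simp [hz i hi]

lemma mul_le_sq_of_card_pos_eigenvalues_le_one (hA : A.IsHermitian)
    (hpos : (Finset.univ.filter (fun i => 0 < hA.eigenvalues i)).card ≤ 1) {y₁ y₂ : n → ℝ}
    (h₁ : 0 < y₁ ⬝ᵥ A *ᵥ y₁) :
    (y₁ ⬝ᵥ A *ᵥ y₁) * (y₂ ⬝ᵥ A *ᵥ y₂) ≤ (y₁ ⬝ᵥ A *ᵥ y₂) ^ 2 := by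
  set a : (n → ℝ) → n → ℝ := fun y i => inner ℝ (hA.eigenvectorBasis i) (WithLp.toLp 2 y)
  by_cases hex : ∃ i, 0 < hA.eigenvalues i ∧ a y₁ i ≠ 0
  · obtain ⟨i₀, hi₀, ht⟩ := hex
    set s := a y₂ i₀
    set t := a y₁ i₀
    have hz : ∀ i, 0 < hA.eigenvalues i → a (s • y₁ - t • y₂) i = 0 := by
      intro i hi
      obtain rfl : i = i₀ :=
        Finset.card_le_one.mp hpos i (by simpa using hi) i₀ (by simpa using hi₀)
      simp only [a, WithLp.toLp_sub, WithLp.toLp_smul, inner_sub_right, inner_smul_right]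
      ring
    have hQ := hA.dotProduct_mulVec_self_nonpos_of_inner_eq_zero hz
    simp only [sub_dotProduct, dotProduct_sub, mulVec_sub, mulVec_smul, smul_dotProduct,
      dotProduct_smul, smul_eq_mul, hA.dotProduct_mulVec_comm y₁ y₂] at hQ
    -- `Q₁ · Q(s y₁ - t y₂) = (s Q₁ - t B)² + t² (Q₁ Q₂ - B²)`
    nlinarith [sq_nonneg (s * (y₁ ⬝ᵥ A *ᵥ y₁) - t * (y₁ ⬝ᵥ A *ᵥ y₂)), sq_pos_of_ne_zero ht]
  · push Not at hex
    exact absurd (hA.dotProduct_mulVec_self_nonpos_of_inner_eq_zero hex) h₁.not_ge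

lemma four_mul_le_sq_of_card_pos_eigenvalues_le_one (hA : A.IsHermitian)
    (hpos : (Finset.univ.filter (fun i => 0 < hA.eigenvalues i)).card ≤ 1) {p q r s : n}
    (hp : A p p = 0) (hq : A q q = 0) (hr : A r r = 0) (hs : A s s = 0) (hpq : 0 < A p q) :
    4 * A p q * A r s ≤ (A p r + A p s + A q r + A q s) ^ 2 := by
  have hqp : A q p = A p q := by simpa using hA.apply p q
  have hsr : A s r = A r s := by simpa using hA.apply r s
  have := hA.mul_le_sq_of_card_pos_eigenvalues_le_one hpos
    (y₁ := Pi.single p 1 + Pi.single q 1) (y₂ := Pi.single r 1 + Pi.single s 1)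
  simp only [add_dotProduct, dotProduct_add, mulVec_add, mulVec_single_one, single_one_dotProduct,
    col_apply, hp, hq, hr, hs, hqp, hsr] at this
  linarith [this (by linarith)]

lemma apply_ne_of_card_pos_eigenvalues_le_one (hA : A.IsHermitian)
    (hpos : (Finset.univ.filter (fun i => 0 < hA.eigenvalues i)).card ≤ 1) {u v w x : n}
    (hu : A u u = 0) (hv : A v v = 0) (hw : A w w = 0) (hx : A x x = 0) (huv : 0 < A u v)
    (huw : A u w = A u v) (hvw : A v w = A u v) (hux : A u x = 0) (hvx : A v x = 0) :
    A w x ≠ A u v := by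
  intro hwx
  have hsymm : ∀ i j, A j i = A i j := fun i j => by simpa using hA.apply i j
  have := hA.mul_le_sq_of_card_pos_eigenvalues_le_one hpos
    (y₁ := Pi.single u 1 + Pi.single v 1 + Pi.single w 1)
    (y₂ := Pi.single u 1 + Pi.single v 1 - Pi.single w 1 - Pi.single x 1 - Pi.single x 1)
  simp only [add_dotProduct, sub_dotProduct, dotProduct_add, dotProduct_sub, mulVec_add,
    mulVec_sub, mulVec_single_one, single_one_dotProduct, col_apply, hu, hv, hw, hx, hsymm u v,
    hsymm u w, hsymm v w, hsymm u x, hsymm v x, hsymm w x, huw, hvw, hux, hvx, hwx] at this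
  nlinarith [this (by nlinarith)]

end Matrix.IsHermitian

namespace SimpleGraph

variable {V : Type*} {G : SimpleGraph V} {u v : V}

lemma exists_adj_dist_add_one_eq_of_dist_ne_zero (h : G.dist u v ≠ 0) :
    ∃ x, G.Adj u x ∧ G.dist x v + 1 = G.dist u v := by
  obtain ⟨p, hp⟩ := exists_walk_of_dist_ne_zero h
  cases p with
  | nil => simp at h
  | cons hadj q =>
    refine ⟨_, hadj, le_antisymm ?_ ?_⟩
    · rw [← hp, Walk.length_cons]
      exact Nat.add_le_add_right (dist_le q) 1
    · have := hadj.reachable.dist_triangle_left v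
      rw [dist_eq_one_iff_adj.mpr hadj] at this
      omega

end SimpleGraph

section AntiAdjacency

variable {V : Type*} [Fintype V] (G : SimpleGraph V) {u v : V}

lemma dist_le_ecc (u v : V) : G.dist u v ≤ ecc G u :=
  Finset.le_sup (Finset.mem_univ v)

lemma exists_dist_eq_ecc [Nonempty V] (u : V) : ∃ v, G.dist u v = ecc G u := by
  obtain ⟨v, -, hv⟩ := Finset.exists_mem_eq_sup Finset.univ Finset.univ_nonempty (G.dist u)
  exact ⟨v, hv.symm⟩

lemma ecc_eq_of_dist_eq {d : ℕ} (hsup : ∀ t, ecc G t ≤ d) (h : G.dist u v = d) : ecc G u = d :=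
  le_antisymm (hsup u) (h ▸ dist_le_ecc G u v)

lemma antiAdj_apply_of_dist_eq_min (h : G.dist u v = min (ecc G u) (ecc G v)) :
    antiAdj G u v = G.dist u v :=
  if_pos h

lemma antiAdj_apply_of_dist_ne_min (h : G.dist u v ≠ min (ecc G u) (ecc G v)) :
    antiAdj G u v = 0 :=
  if_neg h

lemma antiAdj_apply_self (h : ecc G u ≠ 0) : antiAdj G u u = 0 :=
  antiAdj_apply_of_dist_ne_min G (by rw [SimpleGraph.dist_self]; omega)

lemma antiAdj_apply_of_ecc_eq {e : ℕ} (hu : ecc G u = e) (hv : ecc G v = e) :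
    antiAdj G u v = if G.dist u v = e then (e : ℝ) else 0 := by
  by_cases h : G.dist u v = e
  · rw [if_pos h, antiAdj_apply_of_dist_eq_min G (by omega), h]
  · rw [if_neg h, antiAdj_apply_of_dist_ne_min G (by omega)]

variable [DecidableEq V]

lemma ecc_add_one_eq_of_adj_of_dist_add_one_eq (hH : (antiAdj G).IsHermitian)
    (hpos : (Finset.univ.filter (fun i => 0 < hH.eigenvalues i)).card ≤ 1) {d : ℕ} (hd : 2 ≤ d)
    (hsup : ∀ t, ecc G t ≤ d) {x : V} (huv : G.dist u v = d) (hux : G.Adj u x)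
    (hxv : G.dist x v + 1 = d) : ecc G x + 1 = d := by
  suffices ecc G x ≠ d by have := hsup x; have := dist_le_ecc G x v; omega
  intro hx
  have : Nonempty V := ⟨u⟩
  obtain ⟨w, hxw⟩ := exists_dist_eq_ecc G x
  have hwx : G.dist w x = d := G.dist_comm.trans (hxw.trans hx)
  have hu := ecc_eq_of_dist_eq G hsup huv
  have hv := ecc_eq_of_dist_eq G hsup (G.dist_comm.trans huv)
  have hw := ecc_eq_of_dist_eq G hsup hwx
  have hA : ∀ {p q}, ecc G p = d → ecc G q = d →
      antiAdj G p q = if G.dist p q = d then (d : ℝ) else 0 :=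
    antiAdj_apply_of_ecc_eq G
  have hdiag : ∀ {p}, ecc G p = d → antiAdj G p p = 0 := fun hp => antiAdj_apply_self G (by omega)
  have hAuv : antiAdj G u v = d := by rw [hA hu hv, if_pos huv]
  have hAxw : antiAdj G x w = d := by rw [hA hx hw, if_pos (hxw.trans hx)]
  have hAux : antiAdj G u x = 0 := by
    rw [hA hu hx, if_neg (by rw [SimpleGraph.dist_eq_one_iff_adj.mpr hux]; omega)]
  have hAvx : antiAdj G v x = 0 := by rw [hA hv hx, if_neg (by rw [G.dist_comm]; omega)]
  have hd₀ : (0 : ℝ) < d := by exact_mod_cast (by omega : 0 < d)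
  by_cases hfar : G.dist u w = d ∧ G.dist v w = d
  · refine hH.apply_ne_of_card_pos_eigenvalues_le_one hpos (hdiag hu) (hdiag hv) (hdiag hw)
      (hdiag hx) (hAuv ▸ hd₀) ?_ ?_ hAux hAvx ?_
    · rw [hA hu hw, if_pos hfar.1, hAuv]
    · rw [hA hv hw, if_pos hfar.2, hAuv]
    · rw [hA hw hx, if_pos hwx, hAuv]
  · have key := hH.four_mul_le_sq_of_card_pos_eigenvalues_le_one hpos (hdiag hu) (hdiag hv)
      (hdiag hx) (hdiag hw) (hAuv ▸ hd₀)
    rw [hAuv, hAxw, hAux, hAvx, hA hu hw, hA hv hw] at key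
    split_ifs at key <;> first | exact hfar ⟨‹_›, ‹_›⟩ | nlinarith

lemma le_two_of_adj_of_ecc_add_one_eq (hH : (antiAdj G).IsHermitian)
    (hpos : (Finset.univ.filter (fun i => 0 < hH.eigenvalues i)).card ≤ 1) {d : ℕ} {x y : V}
    (hu : ecc G u = d) (hv : ecc G v = d) (huv : G.dist u v = d)
    (hux : G.Adj u x) (hxv : G.dist x v + 1 = d) (hx : ecc G x + 1 = d)
    (hvy : G.Adj v y) (hyu : G.dist y u + 1 = d) (hy : ecc G y + 1 = d) : d ≤ 2 := by
  by_contra! hd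
  have hux₁ := SimpleGraph.dist_eq_one_iff_adj.mpr hux
  have hvy₁ := SimpleGraph.dist_eq_one_iff_adj.mpr hvy
  have hyv := G.dist_comm (u := y) (v := v)
  have hvx := G.dist_comm (u := v) (v := x)
  have huy := G.dist_comm (u := u) (v := y)
  have hyx := G.dist_comm (u := y) (v := x)
  have := dist_le_ecc G x y
  have hdiag : ∀ p, ecc G p ≠ 0 → antiAdj G p p = 0 := fun _ => antiAdj_apply_self G
  have hAuv : antiAdj G u v = d := by rw [antiAdj_apply_of_dist_eq_min G (by omega), huv]
  have hAux : antiAdj G u x = 0 := antiAdj_apply_of_dist_ne_min G (by omega)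
  have hAyv : antiAdj G y v = 0 := antiAdj_apply_of_dist_ne_min G (by omega)
  have hAuy : antiAdj G u y = G.dist y u := by
    rw [antiAdj_apply_of_dist_eq_min G (by omega), huy]
  have hAvx : antiAdj G v x = G.dist x v := by
    rw [antiAdj_apply_of_dist_eq_min G (by omega), hvx]
  have hyu' : (G.dist y u : ℝ) + 1 = d := by exact_mod_cast hyu
  have hxv' : (G.dist x v : ℝ) + 1 = d := by exact_mod_cast hxv
  have hd' : (3 : ℝ) ≤ d := by exact_mod_cast hd
  by_cases hxy : G.dist x y + 1 = d
  · have hAxy : antiAdj G x y = G.dist x y := antiAdj_apply_of_dist_eq_min G (by omega)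
    have hAvy : antiAdj G v y = 0 := antiAdj_apply_of_dist_ne_min G (by omega)
    have hxy' : (G.dist x y : ℝ) + 1 = d := by exact_mod_cast hxy
    have key := hH.four_mul_le_sq_of_card_pos_eigenvalues_le_one hpos (hdiag u (by omega))
      (hdiag v (by omega)) (hdiag x (by omega)) (hdiag y (by omega)) (by rw [hAuv]; linarith)
    rw [hAuv, hAxy, hAux, hAuy, hAvx, hAvy] at key
    nlinarith
  · have hAyx : antiAdj G y x = 0 := antiAdj_apply_of_dist_ne_min G (by omega)
    have key := hH.four_mul_le_sq_of_card_pos_eigenvalues_le_one hpos (hdiag u (by omega))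
      (hdiag y (by omega)) (hdiag v (by omega)) (hdiag x (by omega)) (by rw [hAuy]; linarith)
    rw [hAuv, hAux, hAuy, hAvx, hAyv, hAyx] at key
    nlinarith

lemma le_two_of_forall_ecc_le_of_dist_eq (hH : (antiAdj G).IsHermitian)
    (hpos : (Finset.univ.filter (fun i => 0 < hH.eigenvalues i)).card ≤ 1) {d : ℕ}
    (hsup : ∀ t, ecc G t ≤ d) (huv : G.dist u v = d) : d ≤ 2 := by
  by_contra! hd
  have hvu : G.dist v u = d := G.dist_comm.trans huv
  obtain ⟨x, hux, hxv⟩ :=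
    SimpleGraph.exists_adj_dist_add_one_eq_of_dist_ne_zero (huv.trans_ne (by omega))
  obtain ⟨y, hvy, hyu⟩ :=
    SimpleGraph.exists_adj_dist_add_one_eq_of_dist_ne_zero (hvu.trans_ne (by omega))
  rw [huv] at hxv
  rw [hvu] at hyu
  refine hd.not_ge (le_two_of_adj_of_ecc_add_one_eq G hH hpos (ecc_eq_of_dist_eq G hsup huv)
    (ecc_eq_of_dist_eq G hsup hvu) huv hux hxv ?_ hvy hyu ?_)
  · exact ecc_add_one_eq_of_adj_of_dist_add_one_eq G hH hpos (by omega) hsup huv hux hxv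
  · exact ecc_add_one_eq_of_adj_of_dist_add_one_eq G hH hpos (by omega) hsup hvu hvy hyu

end AntiAdjacency

theorem diam_le_two_of_one_positive_antiadjacency_eigenvalue_general
    {V : Type*} [Fintype V] [DecidableEq V] (G : SimpleGraph V)
    (hH : (antiAdj G).IsHermitian)
    (hone : (Finset.univ.filter (fun i => 0 < hH.eigenvalues i)).card = 1) :
    Finset.univ.sup (ecc G) ≤ 2 := by
  cases isEmpty_or_nonempty V
  · simp [Finset.univ_eq_empty]
  obtain ⟨u, -, hu⟩ := Finset.exists_mem_eq_sup Finset.univ Finset.univ_nonempty (ecc G)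
  obtain ⟨v, hv⟩ := exists_dist_eq_ecc G u
  exact le_two_of_forall_ecc_le_of_dist_eq G hH hone.le
    (fun t => Finset.le_sup (Finset.mem_univ t)) (hv.trans hu.symm)

/-- A connected graph with exactly one positive anti-adjacency eigenvalue has diameter
at most 2. -/
theorem diam_le_two_of_one_positive_antiadjacency_eigenvalue
    {V : Type*} [Fintype V] [DecidableEq V] (G : SimpleGraph V) (hG : G.Connected)
    (hH : (antiAdj G).IsHermitian)
    (hone : (Finset.univ.filter (fun i => 0 < hH.eigenvalues i)).card = 1) :
    Finset.univ.sup (ecc G) ≤ 2 :=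
  diam_le_two_of_one_positive_antiadjacency_eigenvalue_general G hH hone
end

section
/- No connected graph has exactly one anti-adjacency eigenvalue different from 0 and −2. -/
namespace AntiAdjAux

open Finset Matrix

set_option linter.unusedSectionVars false

variable {V : Type*} [Fintype V] [DecidableEq V] {G : SimpleGraph V}

lemma antiAdj_apply (G : SimpleGraph V) (u v : V) :
    antiAdj G u v
      = if G.dist u v = min (ecc G u) (ecc G v) then (G.dist u v : ℝ) else 0 := rfl

lemma antiAdj_symm (G : SimpleGraph V) (u v : V) : antiAdj G u v = antiAdj G v u := by
  rw [antiAdj_apply, antiAdj_apply, SimpleGraph.dist_comm, min_comm]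

lemma antiAdj_diag (G : SimpleGraph V) (u : V) : antiAdj G u u = 0 := by
  rw [antiAdj_apply, SimpleGraph.dist_self]
  split <;> simp

lemma dist_le_ecc (G : SimpleGraph V) (u v : V) : G.dist u v ≤ ecc G u :=
  Finset.le_sup (Finset.mem_univ v)

lemma ecc_pos (hG : G.Connected) (h2 : 1 < Fintype.card V) (u : V) : 1 ≤ ecc G u := by
  obtain ⟨v, hv⟩ := Fintype.exists_ne_of_one_lt_card h2 u
  calc 1 ≤ G.dist u v := hG.pos_dist_of_ne (Ne.symm hv)
    _ ≤ ecc G u := dist_le_ecc G u v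

lemma exists_attain (hG : G.Connected) (h2 : 1 < Fintype.card V) (u : V) :
    ∃ v, v ≠ u ∧ G.dist u v = ecc G u ∧ antiAdj G u v = (ecc G u : ℝ) := by
  haveI : Nonempty V := Fintype.card_pos_iff.mp (by omega)
  obtain ⟨v, -, hv⟩ := Finset.exists_mem_eq_sup (Finset.univ : Finset V)
    Finset.univ_nonempty (G.dist u)
  have hd : G.dist u v = ecc G u := hv.symm
  have hpos : 1 ≤ ecc G u := ecc_pos hG h2 u
  have hne : v ≠ u := by
    rintro rfl
    rw [SimpleGraph.dist_self] at hd
    omega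
  refine ⟨v, hne, hd, ?_⟩
  have hev : ecc G u ≤ ecc G v := by
    calc ecc G u = G.dist v u := by rw [SimpleGraph.dist_comm]; exact hd.symm
      _ ≤ ecc G v := dist_le_ecc G v u
  rw [antiAdj_apply, hd, min_eq_left hev, if_pos rfl]

lemma exists_mid (hG : G.Connected) {u v : V} (h : G.dist u v = 2) :
    ∃ w, w ≠ u ∧ G.dist u w = 1 := by
  obtain ⟨p, hp⟩ := hG.exists_walk_length_eq_dist u v
  cases p with
  | nil => rw [SimpleGraph.Walk.length_nil] at hp; rw [SimpleGraph.dist_self] at h; omega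
  | cons ha q =>
      rename_i w
      exact ⟨w, (G.ne_of_adj ha).symm, SimpleGraph.dist_eq_one_iff_adj.mpr ha⟩

variable (hG : G.Connected) (h2 : 1 < Fintype.card V)
include hG h2

lemma eccOne_entry {u : V} (hu : ecc G u = 1) (v : V) :
    antiAdj G u v = if v = u then 0 else 1 := by
  by_cases hvu : v = u
  · simp [hvu, antiAdj_diag]
  · have hd : G.dist u v = 1 := by
      have h1 : 1 ≤ G.dist u v := hG.pos_dist_of_ne (Ne.symm hvu)
      have h2' : G.dist u v ≤ 1 := hu ▸ dist_le_ecc G u v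
      omega
    have hmin : min (ecc G u) (ecc G v) = 1 := by
      have := ecc_pos hG h2 v
      omega
    rw [antiAdj_apply, hd, hmin, if_pos rfl, if_neg hvu, Nat.cast_one]

lemma DC_entry {u v : V} (hu : ecc G u = 2) (hv : ecc G v = 1) :
    antiAdj G u v = 1 := by
  rw [antiAdj_symm]
  rw [eccOne_entry hG h2 hv u, if_neg (by rintro rfl; omega)]

lemma DD_entry {u v : V} (hu : ecc G u = 2) (hv : ecc G v = 2) :
    antiAdj G u v = if G.dist u v = 2 then 2 else 0 := by
  rw [antiAdj_apply, hu, hv, min_self]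
  by_cases h : G.dist u v = 2
  · rw [if_pos h, if_pos h, h]; norm_num
  · rw [if_neg h, if_neg h]

lemma DD_two_iff {u v : V} (hu : ecc G u = 2) (hv : ecc G v = 2) :
    antiAdj G u v = 2 ↔ G.dist u v = 2 := by
  rw [DD_entry hG h2 hu hv]
  split <;> simp_all

/-- The set of vertices of eccentricity one. -/
noncomputable def Cse (G : SimpleGraph V) : Finset V :=
  Finset.univ.filter (fun u => ecc G u = 1)

/-- The set of vertices `w` with `antiAdj G u w = 2`. -/
noncomputable def Sse (G : SimpleGraph V) (u : V) : Finset V :=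
  @Finset.filter _ (fun w => antiAdj G u w = 2) (Classical.decPred _) Finset.univ

omit hG h2

lemma mem_Cse {u : V} : u ∈ Cse G ↔ ecc G u = 1 := by
  rw [Cse, Finset.mem_filter]
  simp

lemma mem_Sse {u w : V} : w ∈ Sse G u ↔ antiAdj G u w = 2 := by
  rw [Sse, @Finset.mem_filter _ _ (Classical.decPred _)]
  simp

lemma not_self_mem_Sse {u : V} : u ∉ Sse G u := by
  rw [mem_Sse, antiAdj_diag]
  norm_num

lemma mem_Sse_comm {u w : V} : w ∈ Sse G u ↔ u ∈ Sse G w := by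
  rw [mem_Sse, mem_Sse, antiAdj_symm]

include hG h2

lemma ecc_of_mem_Sse (hecc2 : ∀ w, ecc G w ≤ 2) {u w : V} (hu : ecc G u = 2)
    (hw : w ∈ Sse G u) :
    ecc G w = 2 ∧ w ≠ u := by
  rw [mem_Sse] at hw
  constructor
  · by_contra hne
    have h1 : ecc G w = 1 := by
      have := ecc_pos hG h2 w
      have := hecc2 w
      omega
    rw [DC_entry hG h2 hu h1] at hw
    norm_num at hw
  · rintro rfl
    rw [antiAdj_diag] at hw
    norm_num at hw

lemma Sse_nonempty (hecc2 : ∀ w, ecc G w ≤ 2) {u : V} (hu : ecc G u = 2) :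
    (Sse G u).Nonempty := by
  obtain ⟨v, hne, hd, hAv⟩ := exists_attain hG h2 u
  exact ⟨v, mem_Sse.mpr (by rw [hAv, hu]; norm_num)⟩

lemma prod_decomp (hecc2 : ∀ w, ecc G w ≤ 2) {u v : V}
    (hu : ecc G u = 2) (hv : ecc G v = 2) (w : V) :
    antiAdj G u w * antiAdj G v w
      = (if w ∈ Cse G then (1:ℝ) else 0)
        + 4 * (if w ∈ Sse G u ∩ Sse G v then (1:ℝ) else 0) := by
  have hwd : ecc G w = 1 ∨ ecc G w = 2 := by
    have := ecc_pos hG h2 w; have := hecc2 w; omega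
  rcases hwd with hw | hw
  · rw [DC_entry hG h2 hu hw, DC_entry hG h2 hv hw, if_pos (mem_Cse.mpr hw),
      if_neg (fun hmem => by
        have := mem_Sse.mp (Finset.mem_of_mem_inter_left hmem)
        rw [DC_entry hG h2 hu hw] at this
        norm_num at this)]
    norm_num
  · rw [if_neg (fun hmem => by rw [mem_Cse.mp hmem] at hw; omega)]
    by_cases h1 : w ∈ Sse G u
    · by_cases h2' : w ∈ Sse G v
      · rw [mem_Sse.mp h1, mem_Sse.mp h2', if_pos (Finset.mem_inter.mpr ⟨h1, h2'⟩)]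
        norm_num
      · have : antiAdj G v w = 0 := by
          rw [DD_entry hG h2 hv hw]
          rw [mem_Sse, DD_entry hG h2 hv hw] at h2'
          split at h2' <;> simp_all
        rw [this, if_neg (fun hmem => h2' (Finset.mem_of_mem_inter_right hmem))]
        norm_num
    · have : antiAdj G u w = 0 := by
        rw [DD_entry hG h2 hu hw]
        rw [mem_Sse, DD_entry hG h2 hu hw] at h1
        split at h1 <;> simp_all
      rw [this, if_neg (fun hmem => h1 (Finset.mem_of_mem_inter_left hmem))]
      norm_num

lemma row_decomp (hecc2 : ∀ w, ecc G w ≤ 2) {u : V} (hu : ecc G u = 2) (w : V) :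
    antiAdj G u w
      = (if w ∈ Cse G then (1:ℝ) else 0) + 2 * (if w ∈ Sse G u then (1:ℝ) else 0) := by
  have hwd : ecc G w = 1 ∨ ecc G w = 2 := by
    have := ecc_pos hG h2 w; have := hecc2 w; omega
  rcases hwd with hw | hw
  · rw [DC_entry hG h2 hu hw, if_pos (mem_Cse.mpr hw), if_neg (fun hmem => by
      have := mem_Sse.mp hmem
      rw [DC_entry hG h2 hu hw] at this
      norm_num at this)]
    norm_num
  · rw [if_neg (fun hmem => by rw [mem_Cse.mp hmem] at hw; omega)]
    by_cases h1 : w ∈ Sse G u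
    · rw [mem_Sse.mp h1, if_pos h1]; norm_num
    · have : antiAdj G u w = 0 := by
        rw [DD_entry hG h2 hu hw]
        rw [mem_Sse, DD_entry hG h2 hu hw] at h1
        split at h1 <;> simp_all
      rw [this, if_neg h1]
      norm_num

omit hG h2 in
lemma sum_ind (s : Finset V) : ∑ w, (if w ∈ s then (1:ℝ) else 0) = (s.card : ℝ) := by
  rw [Finset.sum_boole]
  congr 1
  rw [Finset.filter_mem_eq_inter, Finset.univ_inter]

lemma sum_DD (hecc2 : ∀ w, ecc G w ≤ 2) {u v : V} (hu : ecc G u = 2) (hv : ecc G v = 2) :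
    ∑ w, antiAdj G u w * antiAdj G v w
      = ((Cse G).card : ℝ) + 4 * ((Sse G u ∩ Sse G v).card : ℝ) := by
  rw [Finset.sum_congr rfl fun w _ => prod_decomp hG h2 hecc2 hu hv w,
    Finset.sum_add_distrib, ← Finset.mul_sum, sum_ind, sum_ind]

lemma row_sum (hecc2 : ∀ w, ecc G w ≤ 2) {u : V} (hu : ecc G u = 2) :
    ∑ w, antiAdj G u w = ((Cse G).card : ℝ) + 2 * ((Sse G u).card : ℝ) := by
  rw [Finset.sum_congr rfl fun w _ => row_decomp hG h2 hecc2 hu w,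
    Finset.sum_add_distrib, ← Finset.mul_sum, sum_ind, sum_ind]

lemma sum_CD (hecc2 : ∀ w, ecc G w ≤ 2) {u v : V} (hu : ecc G u = 1) (hv : ecc G v = 2) :
    ∑ w, antiAdj G u w * antiAdj G v w
      = ((Cse G).card : ℝ) - 1 + 2 * ((Sse G v).card : ℝ) := by
  have key : ∀ w, antiAdj G u w * antiAdj G v w
      = antiAdj G v w - (if w = u then antiAdj G v u else 0) := by
    intro w
    rw [eccOne_entry hG h2 hu w]
    by_cases hw : w = u
    · rw [if_pos hw, if_pos hw, hw]; ring
    · rw [if_neg hw, if_neg hw]; ring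
  rw [Finset.sum_congr rfl fun w _ => key w, Finset.sum_sub_distrib,
    Finset.sum_ite_eq' Finset.univ u (fun _ => antiAdj G v u), if_pos (Finset.mem_univ u),
    row_sum hG h2 hecc2 hv, DC_entry hG h2 hv hu]
  ring

lemma sum_CC (hecc2 : ∀ w, ecc G w ≤ 2) {u v : V} (hu : ecc G u = 1) (hv : ecc G v = 1)
    (huv : u ≠ v) :
    ∑ w, antiAdj G u w * antiAdj G v w = (Fintype.card V : ℝ) - 2 := by
  have key : ∀ w, antiAdj G u w * antiAdj G v w
      = 1 - (if w = u then (1:ℝ) else 0) - (if w = v then (1:ℝ) else 0) := by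
    intro w
    rw [eccOne_entry hG h2 hu w, eccOne_entry hG h2 hv w]
    by_cases hwu : w = u
    · subst hwu
      simp [huv]
    · by_cases hwv : w = v
      · subst hwv
        simp [hwu, Ne.symm huv]
      · simp [hwu, hwv]
  rw [Finset.sum_congr rfl fun w _ => key w, Finset.sum_sub_distrib, Finset.sum_sub_distrib,
    Finset.sum_ite_eq' Finset.univ u (fun _ => (1:ℝ)), if_pos (Finset.mem_univ u),
    Finset.sum_ite_eq' Finset.univ v (fun _ => (1:ℝ)), if_pos (Finset.mem_univ v),
    Finset.sum_const, Finset.card_univ]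
  simp
  ring

lemma sum_CC_diag {u : V} (hu : ecc G u = 1) :
    ∑ w, antiAdj G u w * antiAdj G u w = (Fintype.card V : ℝ) - 1 := by
  have key : ∀ w, antiAdj G u w * antiAdj G u w
      = 1 - (if w = u then (1:ℝ) else 0) := by
    intro w
    rw [eccOne_entry hG h2 hu w]
    by_cases hwu : w = u
    · rw [if_pos hwu, if_pos hwu]; ring
    · rw [if_neg hwu, if_neg hwu]; ring
  rw [Finset.sum_congr rfl fun w _ => key w, Finset.sum_sub_distrib,
    Finset.sum_ite_eq' Finset.univ u (fun _ => (1:ℝ)), if_pos (Finset.mem_univ u),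
    Finset.sum_const, Finset.card_univ]
  simp

omit hG h2 in
lemma nat_minor {c a b s : ℕ} (h : (c+4*a)*(c+4*b) = (c+4*s)^2)
    (ha : s ≤ a) (hb : s ≤ b) (ha1 : 1 ≤ a) (hb1 : 1 ≤ b) : a = s ∧ b = s := by
  constructor
  · by_contra hne
    have hlt : s + 1 ≤ a := by omega
    nlinarith [Nat.mul_le_mul (Nat.add_le_add_left (Nat.mul_le_mul_left 4 hlt) c)
      (Nat.add_le_add_left (Nat.mul_le_mul_left 4 hb) c)]
  · by_contra hne
    have hlt : s + 1 ≤ b := by omega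
    nlinarith [Nat.mul_le_mul (Nat.add_le_add_left (Nat.mul_le_mul_left 4 ha) c)
      (Nat.add_le_add_left (Nat.mul_le_mul_left 4 hlt) c)]

/-- The relevant quadratic matrix entry `(A^2 + 2A) x y`. -/
noncomputable def bf (G : SimpleGraph V) (x y : V) : ℝ :=
  (∑ w, antiAdj G x w * antiAdj G y w) + 2 * antiAdj G x y

lemma bf_CC_diag {u : V} (hu : ecc G u = 1) :
    bf G u u = (Fintype.card V : ℝ) - 1 := by
  rw [bf, sum_CC_diag hG h2 hu, antiAdj_diag]
  ring

lemma bf_CC (hecc2 : ∀ w, ecc G w ≤ 2) {u v : V} (hu : ecc G u = 1) (hv : ecc G v = 1)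
    (huv : u ≠ v) : bf G u v = (Fintype.card V : ℝ) := by
  rw [bf, sum_CC hG h2 hecc2 hu hv huv, eccOne_entry hG h2 hu v, if_neg (Ne.symm huv)]
  ring

lemma bf_DD (hecc2 : ∀ w, ecc G w ≤ 2) {u v : V} (hu : ecc G u = 2) (hv : ecc G v = 2) :
    bf G u v = ((Cse G).card : ℝ) + 4 * ((Sse G u ∩ Sse G v).card : ℝ)
      + 2 * antiAdj G u v := by
  rw [bf, sum_DD hG h2 hecc2 hu hv]

lemma bf_DD_diag (hecc2 : ∀ w, ecc G w ≤ 2) {u : V} (hu : ecc G u = 2) :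
    bf G u u = ((Cse G).card : ℝ) + 4 * ((Sse G u).card : ℝ) := by
  rw [bf_DD hG h2 hecc2 hu hu, Finset.inter_self, antiAdj_diag]
  ring

lemma bf_CD (hecc2 : ∀ w, ecc G w ≤ 2) {u v : V} (hu : ecc G u = 1) (hv : ecc G v = 2) :
    bf G u v = ((Cse G).card : ℝ) + 1 + 2 * ((Sse G v).card : ℝ) := by
  have hvu : v ≠ u := fun h => by rw [h, hu] at hv; omega
  rw [bf, sum_CD hG h2 hecc2 hu hv, antiAdj_symm, DC_entry hG h2 hv hu]
  ring

lemma c_le_one (hecc2 : ∀ w, ecc G w ≤ 2)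
    (hminor : ∀ x y, bf G x x * bf G y y = bf G x y ^ 2) : (Cse G).card ≤ 1 := by
  by_contra hcon
  push_neg at hcon
  obtain ⟨u, hum, v, hvm, huv⟩ := Finset.one_lt_card.mp hcon
  have hu := mem_Cse.mp hum
  have hv := mem_Cse.mp hvm
  have h := hminor u v
  rw [bf_CC_diag hG h2 hu, bf_CC_diag hG h2 hv, bf_CC hG h2 hecc2 hu hv huv] at h
  have hkey : (2 : ℝ) * (Fintype.card V : ℝ) = 1 := by nlinarith
  have : 2 * Fintype.card V = 1 := by exact_mod_cast hkey
  omega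

lemma pair_two (hecc2 : ∀ w, ecc G w ≤ 2)
    (hminor : ∀ x y, bf G x x * bf G y y = bf G x y ^ 2)
    {x y : V} (hx : ecc G x = 2) (hy : ecc G y = 2) (hxy : antiAdj G x y = 2) :
    Sse G x ∩ Sse G y = (Sse G y).erase x := by
  have hxny : x ≠ y := fun h => by rw [h, antiAdj_diag] at hxy; norm_num at hxy
  have hyx : antiAdj G y x = 2 := by rw [← antiAdj_symm]; exact hxy
  have hxS : x ∈ Sse G y := mem_Sse.mpr hyx
  have hyS : y ∈ Sse G x := mem_Sse.mpr hxy
  have hsub1 : Sse G x ∩ Sse G y ⊆ (Sse G x).erase y := fun w hw =>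
    Finset.mem_erase.mpr ⟨fun h => not_self_mem_Sse (h ▸ (Finset.mem_inter.mp hw).2),
      (Finset.mem_inter.mp hw).1⟩
  have hsub2 : Sse G x ∩ Sse G y ⊆ (Sse G y).erase x := fun w hw =>
    Finset.mem_erase.mpr ⟨fun h => not_self_mem_Sse (h ▸ (Finset.mem_inter.mp hw).1),
      (Finset.mem_inter.mp hw).2⟩
  have ha1 : 1 ≤ (Sse G x).card := Finset.card_pos.mpr ⟨y, hyS⟩
  have hb1 : 1 ≤ (Sse G y).card := Finset.card_pos.mpr ⟨x, hxS⟩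
  have hcx : ((Sse G x).erase y).card = (Sse G x).card - 1 := Finset.card_erase_of_mem hyS
  have hcy : ((Sse G y).erase x).card = (Sse G y).card - 1 := Finset.card_erase_of_mem hxS
  have hsle1 : (Sse G x ∩ Sse G y).card + 1 ≤ (Sse G x).card := by
    have := Finset.card_le_card hsub1
    omega
  have hsle2 : (Sse G x ∩ Sse G y).card + 1 ≤ (Sse G y).card := by
    have := Finset.card_le_card hsub2
    omega
  have h := hminor x y
  rw [bf_DD_diag hG h2 hecc2 hx, bf_DD_diag hG h2 hecc2 hy, bf_DD hG h2 hecc2 hx hy,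
    hxy] at h
  have hnat : ((Cse G).card + 4 * (Sse G x).card) * ((Cse G).card + 4 * (Sse G y).card)
      = ((Cse G).card + 4 * ((Sse G x ∩ Sse G y).card + 1))^2 := by
    have : (((Cse G).card + 4 * (Sse G x).card : ℕ) : ℝ)
        * (((Cse G).card + 4 * (Sse G y).card : ℕ) : ℝ)
        = ((((Cse G).card + 4 * ((Sse G x ∩ Sse G y).card + 1) : ℕ)) : ℝ)^2 := by
      push_cast
      nlinarith [h]
    exact_mod_cast this
  obtain ⟨hax, hay⟩ := nat_minor hnat hsle1 hsle2 ha1 hb1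
  exact Finset.eq_of_subset_of_card_le hsub2 (by omega)

lemma all_two (hecc2 : ∀ w, ecc G w ≤ 2)
    (hminor : ∀ x y, bf G x x * bf G y y = bf G x y ^ 2)
    {u v : V} (hu : ecc G u = 2) (hv : ecc G v = 2) (huv : u ≠ v) :
    antiAdj G u v = 2 := by
  by_contra hA2
  have hA0 : antiAdj G u v = 0 := by
    rw [DD_entry hG h2 hu hv] at hA2 ⊢
    split at hA2 <;> simp_all
  -- from the minor equation, `Sse u = Sse v`
  have h := hminor u v
  rw [bf_DD_diag hG h2 hecc2 hu, bf_DD_diag hG h2 hecc2 hv, bf_DD hG h2 hecc2 hu hv,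
    hA0] at h
  have ha1 : 1 ≤ (Sse G u).card := Finset.card_pos.mpr (Sse_nonempty hG h2 hecc2 hu)
  have hb1 : 1 ≤ (Sse G v).card := Finset.card_pos.mpr (Sse_nonempty hG h2 hecc2 hv)
  have hsle1 : (Sse G u ∩ Sse G v).card ≤ (Sse G u).card :=
    Finset.card_le_card Finset.inter_subset_left
  have hsle2 : (Sse G u ∩ Sse G v).card ≤ (Sse G v).card :=
    Finset.card_le_card Finset.inter_subset_right
  have hnat : ((Cse G).card + 4 * (Sse G u).card) * ((Cse G).card + 4 * (Sse G v).card)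
      = ((Cse G).card + 4 * (Sse G u ∩ Sse G v).card)^2 := by
    have : (((Cse G).card + 4 * (Sse G u).card : ℕ) : ℝ)
        * (((Cse G).card + 4 * (Sse G v).card : ℕ) : ℝ)
        = ((((Cse G).card + 4 * (Sse G u ∩ Sse G v).card : ℕ)) : ℝ)^2 := by
      push_cast
      nlinarith [h]
    exact_mod_cast this
  obtain ⟨hax, hay⟩ := nat_minor hnat hsle1 hsle2 ha1 hb1
  have hSu : Sse G u ∩ Sse G v = Sse G u :=
    Finset.eq_of_subset_of_card_le Finset.inter_subset_left (by omega)
  have hSv : Sse G u ∩ Sse G v = Sse G v :=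
    Finset.eq_of_subset_of_card_le Finset.inter_subset_right (by omega)
  have hSS : Sse G u = Sse G v := hSu.symm.trans hSv
  obtain ⟨p, hpu⟩ := Sse_nonempty hG h2 hecc2 hu
  have hpv : p ∈ Sse G v := hSS ▸ hpu
  have hAup : antiAdj G u p = 2 := mem_Sse.mp hpu
  have hAvp : antiAdj G v p = 2 := mem_Sse.mp hpv
  have hpecc : ecc G p = 2 := (ecc_of_mem_Sse hG h2 hecc2 hu hpu).1
  have e1 := pair_two hG h2 hecc2 hminor hu hpecc hAup
  have e2 := pair_two hG h2 hecc2 hminor hv hpecc hAvp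
  rw [hSS] at e1
  have heq : (Sse G p).erase u = (Sse G p).erase v := e1.symm.trans e2
  have huSp : u ∈ Sse G p := mem_Sse_comm.mp hpu
  have : u ∈ (Sse G p).erase v := Finset.mem_erase.mpr ⟨huv, huSp⟩
  rw [← heq] at this
  exact (Finset.mem_erase.mp this).1 rfl

lemma graph_contradiction (hecc2 : ∀ w, ecc G w ≤ 2)
    (hminor : ∀ x y, bf G x x * bf G y y = bf G x y ^ 2) : False := by
  have heccd : ∀ w, ecc G w = 1 ∨ ecc G w = 2 := fun w => by
    have := ecc_pos hG h2 w
    have := hecc2 w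
    omega
  have hc := c_le_one hG h2 hecc2 hminor
  have hex : ∃ v0, ecc G v0 = 2 := by
    by_contra hno
    push_neg at hno
    have huniv : Cse G = Finset.univ := Finset.eq_univ_iff_forall.mpr fun u =>
      mem_Cse.mpr (by rcases heccd u with h | h; exact h; exact absurd h (hno u))
    have : (Cse G).card = Fintype.card V := by rw [huniv, Finset.card_univ]
    omega
  obtain ⟨v0, hv0⟩ := hex
  rcases Nat.lt_or_ge (Cse G).card 1 with hc0 | hc1
  · -- c = 0 : every vertex has eccentricity two
    have hall2 : ∀ w, ecc G w = 2 := fun w => by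
      rcases heccd w with h | h
      · exact absurd (Finset.card_pos.mpr ⟨w, mem_Cse.mpr h⟩) (by omega)
      · exact h
    obtain ⟨p, hp⟩ := Sse_nonempty hG h2 hecc2 hv0
    have hd2 : G.dist v0 p = 2 := (DD_two_iff hG h2 hv0 (hall2 p)).mp (mem_Sse.mp hp)
    obtain ⟨w, hwne, hw1⟩ := exists_mid hG hd2
    have h22 : antiAdj G v0 w = 2 :=
      all_two hG h2 hecc2 hminor hv0 (hall2 w) (Ne.symm hwne)
    have := (DD_two_iff hG h2 hv0 (hall2 w)).mp h22
    omega
  · -- c = 1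
    have hc1' : (Cse G).card = 1 := le_antisymm hc hc1
    obtain ⟨u0, hu0s⟩ := Finset.card_eq_one.mp hc1'
    have hu0 : ecc G u0 = 1 := mem_Cse.mp (hu0s ▸ Finset.mem_singleton_self u0)
    have hne : v0 ≠ u0 := fun h => by rw [h, hu0] at hv0; omega
    have hCeq : ∀ w, ecc G w = 1 → w = u0 := fun w hw => by
      have : w ∈ Cse G := mem_Cse.mpr hw
      rw [hu0s] at this
      exact Finset.mem_singleton.mp this
    have hSv0 : Sse G v0 = (Finset.univ.erase u0).erase v0 := by
      ext w
      rw [mem_Sse, Finset.mem_erase, Finset.mem_erase]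
      constructor
      · intro hw
        have h1 := ecc_of_mem_Sse hG h2 hecc2 hv0 (mem_Sse.mpr hw)
        refine ⟨h1.2, fun hwu => ?_, Finset.mem_univ w⟩
        rw [hwu, hu0] at h1
        omega
      · rintro ⟨hwv, hwu, -⟩
        have hw2 : ecc G w = 2 := by
          rcases heccd w with h | h
          · exact absurd (hCeq w h) hwu
          · exact h
        exact all_two hG h2 hecc2 hminor hv0 hw2 (Ne.symm hwv)
    have hd : (Sse G v0).card = Fintype.card V - 1 - 1 := by
      rw [hSv0, Finset.card_erase_of_mem
        (Finset.mem_erase.mpr ⟨hne, Finset.mem_univ v0⟩),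
        Finset.card_erase_of_mem (Finset.mem_univ u0), Finset.card_univ]
    have hn : Fintype.card V = (Sse G v0).card + 2 := by omega
    have h := hminor u0 v0
    rw [bf_CC_diag hG h2 hu0, bf_DD_diag hG h2 hecc2 hv0,
      bf_CD hG h2 hecc2 hu0 hv0, hc1', hn] at h
    push_cast at h
    nlinarith [h, Nat.cast_nonneg (α := ℝ) (Sse G v0).card]

section spectralsec
open Matrix




omit hG h2
variable {A : Matrix V V ℝ} (hA : A.IsHermitian)

noncomputable def evU (hA : A.IsHermitian) : Matrix V V ℝ := hA.eigenvectorUnitary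

lemma evU_mul_star : evU hA * star (evU hA) = 1 :=
  Matrix.mem_unitaryGroup_iff.mp (hA.eigenvectorUnitary).2

lemma star_mul_evU : star (evU hA) * evU hA = 1 :=
  Matrix.mem_unitaryGroup_iff'.mp (hA.eigenvectorUnitary).2

lemma conj_diag_apply (d : V → ℝ) (x y : V) :
    (evU hA * Matrix.diagonal d * star (evU hA)) x y
      = ∑ i, d i * evU hA x i * evU hA y i := by
  simp only [Matrix.mul_apply, Matrix.diagonal_apply, Matrix.star_apply, star_trivial,
    mul_ite, mul_zero, Finset.sum_ite_eq', Finset.mem_univ, if_true]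
  refine Finset.sum_congr rfl fun i _ => by ring

lemma spectral_real : A = evU hA * Matrix.diagonal hA.eigenvalues * star (evU hA) := by
  have := hA.spectral_theorem
  simpa [evU, RCLike.ofReal_real_eq_id] using this

lemma entry_eq_sum (x y : V) :
    A x y = ∑ i, hA.eigenvalues i * evU hA x i * evU hA y i := by
  conv_lhs => rw [spectral_real hA]
  exact conj_diag_apply hA _ x y

lemma sq_entry_eq_sum (x y : V) :
    (A * A) x y = ∑ i, (hA.eigenvalues i)^2 * evU hA x i * evU hA y i := by
  conv_lhs => rw [spectral_real hA]
  have : (evU hA * Matrix.diagonal hA.eigenvalues * star (evU hA)) *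
      (evU hA * Matrix.diagonal hA.eigenvalues * star (evU hA))
      = evU hA * Matrix.diagonal (fun i => (hA.eigenvalues i)^2) * star (evU hA) := by
    simp only [Matrix.mul_assoc]
    rw [← Matrix.mul_assoc (star (evU hA)) (evU hA), star_mul_evU, Matrix.one_mul,
      ← Matrix.mul_assoc (Matrix.diagonal hA.eigenvalues), Matrix.diagonal_mul_diagonal]
    congr 2
    ext i
    ring
  rw [this, conj_diag_apply]

lemma one_entry_eq_sum (x y : V) :
    (1 : Matrix V V ℝ) x y = ∑ i, evU hA x i * evU hA y i := by
  have := congrFun (congrFun (evU_mul_star hA) x) y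
  rw [Matrix.mul_apply] at this
  simp only [Matrix.star_apply, star_trivial] at this
  rw [← this]

lemma trace_eq_sum_eig : A.trace = ∑ i, hA.eigenvalues i := by
  conv_lhs => rw [spectral_real hA]
  rw [Matrix.trace]
  simp only [Matrix.diag_apply, conj_diag_apply hA]
  rw [Finset.sum_comm]
  refine Finset.sum_congr rfl fun i _ => ?_
  have h := congrFun (congrFun (star_mul_evU hA) i) i
  rw [Matrix.mul_apply] at h
  simp only [Matrix.star_apply, star_trivial, Matrix.one_apply_eq] at h
  calc ∑ x, hA.eigenvalues i * evU hA x i * evU hA x i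
      = hA.eigenvalues i * ∑ x, evU hA x i * evU hA x i := by
        rw [Finset.mul_sum]; exact Finset.sum_congr rfl fun x _ => by ring
    _ = hA.eigenvalues i := by rw [h, mul_one]
end spectralsec


end AntiAdjAux


open AntiAdjAux in
/-- No connected graph has exactly one anti-adjacency eigenvalue different from `0` and
`−2` (counted with multiplicity). -/
theorem no_graph_with_one_antiadjacency_eigenvalue_outside
    {V : Type*} [Fintype V] [DecidableEq V] (G : SimpleGraph V) (hG : G.Connected)
    (hH : (antiAdj G).IsHermitian) :
    (Finset.univ.filter
      (fun i => hH.eigenvalues i ≠ 0 ∧ hH.eigenvalues i ≠ -2)).card ≠ 1 := by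
  classical
  intro hcard
  rw [Finset.card_eq_one] at hcard
  obtain ⟨i0, hi0⟩ := hcard
  have hi0' : hH.eigenvalues i0 ≠ 0 ∧ hH.eigenvalues i0 ≠ -2 := by
    have : i0 ∈ Finset.univ.filter
        (fun i => hH.eigenvalues i ≠ 0 ∧ hH.eigenvalues i ≠ -2) :=
      hi0 ▸ Finset.mem_singleton_self i0
    exact (Finset.mem_filter.mp this).2
  have hother : ∀ i, i ≠ i0 → hH.eigenvalues i = 0 ∨ hH.eigenvalues i = -2 := by
    intro i hi
    by_contra hcon
    push_neg at hcon
    have : i ∈ Finset.univ.filter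
        (fun i => hH.eigenvalues i ≠ 0 ∧ hH.eigenvalues i ≠ -2) :=
      Finset.mem_filter.mpr ⟨Finset.mem_univ _, hcon⟩
    rw [hi0, Finset.mem_singleton] at this
    exact hi this
  have htr : ∑ i, hH.eigenvalues i = 0 := by
    rw [← trace_eq_sum_eig hH, Matrix.trace]
    exact Finset.sum_eq_zero fun u _ => antiAdj_diag G u
  have hsplit : ∑ i ∈ Finset.univ.erase i0, hH.eigenvalues i + hH.eigenvalues i0 = 0 := by
    rw [Finset.sum_erase_add _ _ (Finset.mem_univ i0)]
    exact htr
  have hpos : 0 ≤ hH.eigenvalues i0 := by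
    have hrest : ∑ i ∈ Finset.univ.erase i0, hH.eigenvalues i ≤ 0 :=
      Finset.sum_nonpos fun i hi => by
        rcases hother i (Finset.ne_of_mem_erase hi) with h | h <;> rw [h] <;> norm_num
    linarith
  have hplus : ∀ i, 0 ≤ hH.eigenvalues i + 2 := by
    intro i
    by_cases h : i = i0
    · rw [h]; linarith
    · rcases hother i h with h' | h' <;> rw [h'] <;> norm_num
  have hgzero : ∀ i, i ≠ i0 → hH.eigenvalues i ^ 2 + 2 * hH.eigenvalues i = 0 := by
    intro i hi
    rcases hother i hi with h | h <;> rw [h] <;> ring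
  -- the vertex type has at least two elements
  have hV2 : 1 < Fintype.card V := by
    by_contra hle
    push_neg at hle
    haveI : Subsingleton V := Fintype.card_le_one_iff_subsingleton.mp hle
    have hone : ∑ i, hH.eigenvalues i = hH.eigenvalues i0 :=
      Finset.sum_eq_single_of_mem i0 (Finset.mem_univ i0)
        (fun b _ hb => (hb (Subsingleton.elim b i0)).elim)
    exact hi0'.1 (by rw [← hone, htr])
  -- the rank-one minor identity for A^2 + 2A
  have hBsingle : ∀ x y, bf G x y
      = (hH.eigenvalues i0 ^ 2 + 2 * hH.eigenvalues i0) * (evU hH x i0 * evU hH y i0) := by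
    intro x y
    have h1 : ∑ w, antiAdj G x w * antiAdj G y w = (antiAdj G * antiAdj G) x y := by
      rw [Matrix.mul_apply]
      exact Finset.sum_congr rfl fun w _ => by rw [antiAdj_symm G y w]
    rw [bf, h1, sq_entry_eq_sum hH, entry_eq_sum hH, Finset.mul_sum,
      ← Finset.sum_add_distrib]
    rw [Finset.sum_eq_single_of_mem i0 (Finset.mem_univ i0) ?_]
    · ring
    · intro b _ hb
      have hb0 := hgzero b hb
      linear_combination (evU hH x b * evU hH y b) * hb0
  have hminor : ∀ x y, bf G x x * bf G y y = bf G x y ^ 2 := by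
    intro x y
    rw [hBsingle, hBsingle, hBsingle]
    ring
  -- entries are at most 2
  have hub : ∀ u v, u ≠ v → antiAdj G u v ≤ 2 := by
    intro u v huv
    have hM : ∀ x y : V, (∑ i, (hH.eigenvalues i + 2) * (evU hH x i * evU hH y i))
        = antiAdj G x y + 2 * (1 : Matrix V V ℝ) x y := by
      intro x y
      rw [entry_eq_sum hH (x := x), one_entry_eq_sum hH, Finset.mul_sum,
        ← Finset.sum_add_distrib]
      exact Finset.sum_congr rfl fun i _ => by ring
    have h0 : 0 ≤ ∑ i, (hH.eigenvalues i + 2)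
        * ((evU hH u i - evU hH v i) * (evU hH u i - evU hH v i)) :=
      Finset.sum_nonneg fun i _ => mul_nonneg (hplus i) (mul_self_nonneg _)
    have hexp : ∑ i, (hH.eigenvalues i + 2)
        * ((evU hH u i - evU hH v i) * (evU hH u i - evU hH v i))
        = (∑ i, (hH.eigenvalues i + 2) * (evU hH u i * evU hH u i))
          + (∑ i, (hH.eigenvalues i + 2) * (evU hH v i * evU hH v i))
          - 2 * (∑ i, (hH.eigenvalues i + 2) * (evU hH u i * evU hH v i)) := by
      rw [Finset.mul_sum, ← Finset.sum_add_distrib, ← Finset.sum_sub_distrib]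
      exact Finset.sum_congr rfl fun i _ => by ring
    rw [hexp, hM, hM, hM, antiAdj_diag, antiAdj_diag, Matrix.one_apply_eq,
      Matrix.one_apply_eq, Matrix.one_apply_ne huv] at h0
    linarith
  -- eccentricities are at most 2
  have hecc2 : ∀ u, ecc G u ≤ 2 := by
    intro u
    obtain ⟨v, hne, hd, hAv⟩ := exists_attain hG hV2 u
    have := hub u v (Ne.symm hne)
    rw [hAv] at this
    exact_mod_cast this
  exact graph_contradiction hG hV2 hecc2 hminor
end

section
/- Let G = K_{n_0} ∨ K_{n_1,n_2} be the join of a complete graph on n_0 ≥ 1 vertices with a complete bipartite graph with parts of sizes n_1 ≥ n_2 ≥ 2, and let n = n_0 + n_1 + n_2. Then the anti-adjacency characteristic polynomial of G equals (λ+1)^{n_0−1}(λ+2)^{n−n_0−2}·f(λ), where f(λ) = (λ−n_0+1)(λ−2n_1+2)(λ−2n_2+2) − n_0 n_1(λ−2n_2+2) − n_0 n_2(λ−2n_1+2). -/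
/-!
Grouping the vertices into `K_{n₀}` and the two sides of `K_{n₁,n₂}`, the anti-adjacency matrix is
`B(p u, p v)` off the diagonal for the part map `p` and the `3 × 3` matrix `B` of part-to-part
entries. Hence `x I - A = D - P B Pᵀ` with `D` diagonal (`x + 1` on `K_{n₀}`, `x + 2` elsewhere)
and `P` the part-indicator matrix, and the matrix determinant lemma gives
`det (x I - A) = det D · det (I - Pᵀ D⁻¹ P B)`, where `Pᵀ D⁻¹ P = diag (nᵢ / dᵢ)`.
The remaining `3 × 3` determinant is the cubic factor. This holds for every `x ∉ {-1, -2}`,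
hence as an identity of polynomials.
-/

open Matrix Finset

namespace Matrix

variable {V ι K : Type*} [Fintype V] [DecidableEq V] [Fintype ι] [DecidableEq ι] [Field K]

theorem det_diagonal_sub_submatrix (p : V → ι) (d : ι → K) (hd : ∀ i, d i ≠ 0)
    (B : Matrix ι ι K) :
    (diagonal (d ∘ p) - B.submatrix p p).det =
      (∏ u, d (p u)) * (1 - diagonal (fun i => (#{u | p u = i} : K) / d i) * B).det := by
  set P : Matrix V ι K := of fun u i => if p u = i then 1 else 0
  have hB : B.submatrix p p = P * B * Pᵀ := by
    ext u v
    simp [P, mul_apply]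
  have hdet : IsUnit (diagonal (d ∘ p)).det := by
    simpa [det_diagonal, isUnit_iff_ne_zero, Finset.prod_ne_zero_iff] using fun u => hd (p u)
  have hinv : (diagonal (d ∘ p))⁻¹ = diagonal fun u => (d (p u))⁻¹ :=
    inv_eq_left_inv (by simp [diagonal_mul_diagonal, hd])
  have hfiber : Pᵀ * (diagonal (d ∘ p))⁻¹ * P =
      diagonal (fun i => (#{u | p u = i} : K) / d i) := by
    ext i j
    rw [hinv, mul_apply]
    by_cases hij : i = j
    · subst hij
      have hsummand : ∀ u, (Pᵀ * diagonal fun u => (d (p u))⁻¹) i u * P u i =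
          if p u = i then (d i)⁻¹ else 0 := by
        intro u
        by_cases hu : p u = i <;> simp [P, mul_diagonal, hu]
      simp only [hsummand, ← Finset.sum_filter, sum_const, nsmul_eq_mul, diagonal_apply_eq,
        div_eq_mul_inv]
    · have hsummand : ∀ u, (Pᵀ * diagonal fun u => (d (p u))⁻¹) i u * P u j = 0 := by
        intro u
        by_cases hu : p u = i <;> simp [P, mul_diagonal, hu, hij]
      simp only [hsummand, sum_const_zero, diagonal_apply_ne _ hij]
  rw [hB, sub_eq_add_neg, ← Matrix.neg_mul, det_add_mul _ _ hdet, det_diagonal, Matrix.mul_neg,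
    ← Matrix.mul_assoc, hfiber, ← sub_eq_add_neg]
  rfl

end Matrix

namespace SimpleGraph

variable {V : Type*} {G : SimpleGraph V} {u v w : V}

theorem dist_eq_two_of_adj_of_adj (hne : u ≠ v) (hnadj : ¬G.Adj u v) (hu : G.Adj u w)
    (hv : G.Adj w v) : G.dist u v = 2 := by
  rw [dist, edist_eq_two_iff.mpr ⟨hne, hnadj, w, ⟨hu, hv.symm⟩⟩]
  rfl

theorem ecc_eq_of_forall_dist_le [Fintype V] {k : ℕ} (h : ∀ w, G.dist u w ≤ k)
    (hv : G.dist u v = k) : ecc G u = k :=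
  le_antisymm (Finset.sup_le fun w _ => h w) (hv ▸ Finset.le_sup (Finset.mem_univ v))

theorem antiAdj_self [Fintype V] (u : V) : antiAdj G u u = 0 := by
  simp [antiAdj]

end SimpleGraph

namespace JoinCompleteBipartite

open SimpleGraph

def part {n₀ n₁ n₂ : ℕ} : Fin n₀ ⊕ (Fin n₁ ⊕ Fin n₂) → Fin 3 :=
  Sum.elim (fun _ => 0) (Sum.elim (fun _ => 1) (fun _ => 2))

theorem card_filter_part_eq (n₀ n₁ n₂ : ℕ) (i : Fin 3) :
    #{u : Fin n₀ ⊕ (Fin n₁ ⊕ Fin n₂) | part u = i} = ![n₀, n₁, n₂] i := by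
  rw [Finset.card_filter]
  fin_cases i <;> simp [Fintype.sum_sum_type, part]

-- The anti-adjacency entry between distinct vertices of parts `i` and `j`, where part `0` is
-- `K_{n₀}` (eccentricity 1) and parts `1`, `2` are the sides of `K_{n₁,n₂}` (eccentricity 2).
def quotientMatrix : Matrix (Fin 3) (Fin 3) ℝ :=
  !![1, 1, 1; 1, 2, 0; 1, 0, 2]

theorem det_one_sub_diagonal_mul_quotientMatrix (a b c : ℝ) :
    (1 - diagonal ![a, b, c] * quotientMatrix).det =
      (1 - a) * (1 - 2 * b) * (1 - 2 * c) - a * b * (1 - 2 * c) - a * c * (1 - 2 * b) := by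
  rw [det_fin_three]
  simp [quotientMatrix, one_apply]
  ring

section Graph

variable {n₀ n₁ n₂ : ℕ} {G : SimpleGraph (Fin n₀ ⊕ (Fin n₁ ⊕ Fin n₂))}
  (hGadj : ∀ u v, G.Adj u v ↔ u ≠ v ∧
    (u.isLeft = true ∨ v.isLeft = true ∨
      (∃ a b, u = Sum.inr (Sum.inl a) ∧ v = Sum.inr (Sum.inr b)) ∨
      (∃ a b, u = Sum.inr (Sum.inr a) ∧ v = Sum.inr (Sum.inl b))))
include hGadj

theorem adj_inl_of_ne {i : Fin n₀} {v : Fin n₀ ⊕ (Fin n₁ ⊕ Fin n₂)} (h : Sum.inl i ≠ v) :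
    G.Adj (Sum.inl i) v :=
  (hGadj _ _).mpr ⟨h, Or.inl rfl⟩

theorem dist_eq_two_of_not_adj (hn₀ : 1 ≤ n₀) {u v : Fin n₀ ⊕ (Fin n₁ ⊕ Fin n₂)} (huv : u ≠ v)
    (hnadj : ¬G.Adj u v) : G.dist u v = 2 := by
  have hwu : Sum.inl ⟨0, hn₀⟩ ≠ u := by
    rintro rfl; exact hnadj (adj_inl_of_ne hGadj huv)
  have hwv : Sum.inl ⟨0, hn₀⟩ ≠ v := by
    rintro rfl; exact hnadj (adj_inl_of_ne hGadj huv.symm).symm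
  exact dist_eq_two_of_adj_of_adj huv hnadj (adj_inl_of_ne hGadj hwu).symm
    (adj_inl_of_ne hGadj hwv)

theorem ecc_inl (hn₁ : 1 ≤ n₁) (i : Fin n₀) : ecc G (Sum.inl i) = 1 := by
  refine ecc_eq_of_forall_dist_le (v := Sum.inr (Sum.inl ⟨0, hn₁⟩)) (fun w => ?_)
    (dist_eq_one_iff_adj.mpr (adj_inl_of_ne hGadj Sum.inl_ne_inr))
  by_cases h : Sum.inl i = w
  · simp [← h]
  · exact (dist_eq_one_iff_adj.mpr (adj_inl_of_ne hGadj h)).le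

theorem ecc_inr (hn₀ : 1 ≤ n₀) (hn₁ : 2 ≤ n₁) (hn₂ : 2 ≤ n₂) (x : Fin n₁ ⊕ Fin n₂) :
    ecc G (Sum.inr x) = 2 := by
  have hle : ∀ w, G.dist (Sum.inr x) w ≤ 2 := fun w => by
    by_cases h : Sum.inr x = w
    · simp [← h]
    · by_cases hadj : G.Adj (Sum.inr x) w
      · rw [dist_eq_one_iff_adj.mpr hadj]; omega
      · rw [dist_eq_two_of_not_adj hGadj hn₀ h hadj]
  obtain ⟨y, hyx, hy⟩ :
      ∃ y, y ≠ x ∧ part (Sum.inr y : Fin n₀ ⊕ _) = part (Sum.inr x : Fin n₀ ⊕ _) := by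
    rcases x with a | b
    · obtain ⟨a', ha'⟩ := Fintype.exists_ne_of_one_lt_card (by simp; omega) a
      exact ⟨Sum.inl a', by simpa using ha', rfl⟩
    · obtain ⟨b', hb'⟩ := Fintype.exists_ne_of_one_lt_card (by simp; omega) b
      exact ⟨Sum.inr b', by simpa using hb', rfl⟩
  refine ecc_eq_of_forall_dist_le hle (v := Sum.inr y) ?_
  refine dist_eq_two_of_not_adj hGadj hn₀ (by simpa using hyx.symm) ?_
  rcases x with a | b <;> rcases y with a' | b' <;> simp_all [part]

theorem antiAdj_apply (hn₀ : 1 ≤ n₀) (hn₁ : 2 ≤ n₁) (hn₂ : 2 ≤ n₂)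
    (u v : Fin n₀ ⊕ (Fin n₁ ⊕ Fin n₂)) :
    antiAdj G u v = if u = v then 0 else quotientMatrix (part u) (part v) := by
  split_ifs with huv
  · rw [huv, antiAdj_self]
  have hecc₀ := ecc_inl hGadj (by omega : 1 ≤ n₁)
  have hecc := ecc_inr hGadj hn₀ hn₁ hn₂
  by_cases hadj : G.Adj u v
  · rw [antiAdj, of_apply, dist_eq_one_iff_adj.mpr hadj]
    rcases u with i | a | b <;> rcases v with j | a' | b' <;>
      simp_all [part, quotientMatrix]
  · rw [antiAdj, of_apply, dist_eq_two_of_not_adj hGadj hn₀ huv hadj]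
    rcases u with i | a | b <;> rcases v with j | a' | b' <;>
      simp_all [part, quotientMatrix]

theorem eval_charpoly_antiAdj (hn₀ : 1 ≤ n₀) (hn₁ : 2 ≤ n₁) (hn₂ : 2 ≤ n₂) {x : ℝ}
    (hx₁ : x + 1 ≠ 0) (hx₂ : x + 2 ≠ 0) :
    (antiAdj G).charpoly.eval x = (x + 1) ^ n₀ * (x + 2) ^ (n₁ + n₂) *
      (1 - diagonal ![n₀ / (x + 1), n₁ / (x + 2), n₂ / (x + 2)] * quotientMatrix).det := by
  set d : Fin 3 → ℝ := fun i => x + quotientMatrix i i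
  have hd : ∀ i, d i ≠ 0 := by
    simp [d, Fin.forall_fin_succ, quotientMatrix, hx₁, hx₂]
  have hmat : scalar _ x - antiAdj G =
      diagonal (d ∘ part) - quotientMatrix.submatrix part part := by
    ext u v
    by_cases huv : u = v
    · simp [huv, d, antiAdj_apply hGadj hn₀ hn₁ hn₂]
    · simp [huv, antiAdj_apply hGadj hn₀ hn₁ hn₂]
  rw [eval_charpoly, hmat, det_diagonal_sub_submatrix _ _ hd]
  have hprod : ∏ u : Fin n₀ ⊕ (Fin n₁ ⊕ Fin n₂), d (part u) =
      (x + 1) ^ n₀ * (x + 2) ^ (n₁ + n₂) := by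
    simp [Fintype.prod_sum_type, d, part, quotientMatrix, pow_add]
  have hfiber : (fun i => (#{u : Fin n₀ ⊕ (Fin n₁ ⊕ Fin n₂) | part u = i} : ℝ) / d i) =
      ![n₀ / (x + 1), n₁ / (x + 2), n₂ / (x + 2)] := by
    ext i
    fin_cases i <;> simp [card_filter_part_eq, d, quotientMatrix]
  rw [hprod, hfiber]

end Graph

end JoinCompleteBipartite

open Polynomial in
/-- For `G = K_{n₀} ∨ K_{n₁,n₂}` (the join of a complete graph on `n₀ ≥ 1` vertices with a
complete bipartite graph with parts of sizes `n₁ ≥ n₂ ≥ 2`), the anti-adjacency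
characteristic polynomial of `G` is
`(λ+1)^{n₀−1} (λ+2)^{n−n₀−2} ((λ−n₀+1)(λ−2n₁+2)(λ−2n₂+2) − n₀n₁(λ−2n₂+2) − n₀n₂(λ−2n₁+2))`,
where `n = n₀ + n₁ + n₂` (so `n − n₀ − 2 = n₁ + n₂ − 2`). -/
theorem antiAdj_charpoly_join_complete_completeBipartite
    {n₀ n₁ n₂ : ℕ} (hn₀ : 1 ≤ n₀) (hn₁₂ : n₂ ≤ n₁) (hn₂ : 2 ≤ n₂)
    (G : SimpleGraph (Fin n₀ ⊕ (Fin n₁ ⊕ Fin n₂)))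
    (hGadj : ∀ u v, G.Adj u v ↔ u ≠ v ∧
      (u.isLeft = true ∨ v.isLeft = true ∨
        (∃ a b, u = Sum.inr (Sum.inl a) ∧ v = Sum.inr (Sum.inr b)) ∨
        (∃ a b, u = Sum.inr (Sum.inr a) ∧ v = Sum.inr (Sum.inl b)))) :
    (antiAdj G).charpoly =
      (X + C 1) ^ (n₀ - 1) * (X + C 2) ^ (n₁ + n₂ - 2) *
        ((X - C ((n₀ : ℝ) - 1)) * (X - C (2 * (n₁ : ℝ) - 2)) * (X - C (2 * (n₂ : ℝ) - 2)) -
          C ((n₀ : ℝ) * n₁) * (X - C (2 * (n₂ : ℝ) - 2)) -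
          C ((n₀ : ℝ) * n₂) * (X - C (2 * (n₁ : ℝ) - 2))) := by
  refine eq_of_infinite_eval_eq _ _ (Set.Infinite.mono (s := {-1, -2}ᶜ) ?_
    (Set.Finite.infinite_compl (by simp)))
  intro x hx
  simp only [Set.mem_compl_iff, Set.mem_insert_iff, Set.mem_singleton_iff, not_or] at hx
  have hx₁ : x + 1 ≠ 0 := fun h => hx.1 (by linarith)
  have hx₂ : x + 2 ≠ 0 := fun h => hx.2 (by linarith)
  obtain ⟨k, rfl⟩ : ∃ k, n₀ = k + 1 := ⟨n₀ - 1, by omega⟩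
  obtain ⟨m, hm⟩ : ∃ m, n₁ + n₂ = m + 2 := ⟨n₁ + n₂ - 2, by omega⟩
  rw [Set.mem_ofPred_eq,
    JoinCompleteBipartite.eval_charpoly_antiAdj hGadj hn₀ (by omega) hn₂ hx₁ hx₂,
    JoinCompleteBipartite.det_one_sub_diagonal_mul_quotientMatrix, hm]
  simp only [eval_mul, eval_pow, eval_add, eval_sub, eval_X, eval_C, Nat.add_sub_cancel]
  field_simp
  push_cast
  ring
end

section
/- Let G = K_1 ∨ K_{n_1,n_2,n_3} with n_1 ≥ n_2 ≥ n_3 ≥ 2. Then G has at least three anti-adjacency eigenvalues strictly greater than 0; more precisely, ξ_1 ≥ 2n_1 − 2, ξ_2 ≥ 2n_2 − 2, and ξ_3 ≥ 2n_3 − 2, where ξ_1 ≥ ξ_2 ≥ ξ_3 are the three largest anti-adjacency eigenvalues. -/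
open Finset Matrix Module
open scoped RealInnerProductSpace

theorem OrthonormalBasis.finrank_le_card_filter_le_of_le_inner {ι E : Type*} [Fintype ι]
    [NormedAddCommGroup E] [InnerProductSpace ℝ E] [FiniteDimensional ℝ E]
    (b : OrthonormalBasis ι ℝ E) {T : E →ₗ[ℝ] E} {μ : ι → ℝ} (hb : ∀ i, T (b i) = μ i • b i)
    {c : ℝ} {W : Submodule ℝ E} (hW : ∀ y ∈ W, c * ‖y‖ ^ 2 ≤ ⟪y, T y⟫) :
    finrank ℝ W ≤ #{i | c ≤ μ i} := by
  set S : Finset ι := {i | c ≤ μ i}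
  -- Otherwise `W` contains some `y ≠ 0` orthogonal to every `b i` with `c ≤ μ i`, and there
  -- the Rayleigh quotient is `< c`.
  by_contra! hS
  let φ : W →ₗ[ℝ] (S → ℝ) := LinearMap.pi fun s => (innerₛₗ ℝ (b s)).comp W.subtype
  obtain ⟨⟨y, hyW⟩, hker, hy0⟩ := Submodule.exists_mem_ne_zero_of_ne_bot
    (LinearMap.ker_ne_bot_of_finrank_lt (f := φ) (by simpa using hS))
  replace hy0 : y ≠ 0 := by simpa using hy0
  have hyS : ∀ i ∈ S, ⟪b i, y⟫ = 0 := fun i hi => congrFun hker ⟨i, hi⟩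
  have hTy : ⟪y, T y⟫ = ∑ i, μ i * ⟪b i, y⟫ ^ 2 := by
    have hexp : T y = ∑ i, (μ i * ⟪b i, y⟫) • b i := by
      conv_lhs => rw [← b.sum_repr' y]
      simp only [map_sum, map_smul, hb, smul_smul, mul_comm]
    simp only [hexp, inner_sum, inner_smul_right, real_inner_comm y]
    exact sum_congr rfl fun i _ => by ring
  have hpos : 0 < ∑ i, (c - μ i) * ⟪b i, y⟫ ^ 2 := by
    obtain ⟨j, hj⟩ : ∃ j, ⟪b j, y⟫ ≠ 0 := by
      by_contra! h
      exact hy0 (by simpa [h] using (b.sum_repr' y).symm)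
    have hjS : j ∉ S := fun h => hj (hyS j h)
    refine sum_pos' (fun i _ => ?_) ⟨j, mem_univ j, ?_⟩
    · by_cases hi : i ∈ S
      · simp [hyS i hi]
      · have : μ i < c := by simpa [S] using hi
        exact mul_nonneg (by linarith) (sq_nonneg _)
    · have : μ j < c := by simpa [S] using hjS
      exact mul_pos (by linarith) (by positivity)
  have := hW y hyW
  rw [hTy, ← b.sum_sq_inner_right y, mul_sum] at this
  simp only [sub_mul, sum_sub_distrib] at hpos
  linarith

theorem Matrix.IsHermitian.finrank_le_card_filter_le_eigenvalues {n : Type*} [Fintype n]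
    [DecidableEq n] {A : Matrix n n ℝ} (hA : A.IsHermitian) {c : ℝ} {W : Submodule ℝ (n → ℝ)}
    (hW : ∀ y ∈ W, c * (y ⬝ᵥ y) ≤ y ⬝ᵥ (A *ᵥ y)) :
    finrank ℝ W ≤ #{i | c ≤ hA.eigenvalues i} := by
  let e := (WithLp.linearEquiv 2 ℝ (n → ℝ)).symm
  rw [← e.finrank_map_eq]
  refine hA.eigenvectorBasis.finrank_le_card_filter_le_of_le_inner (T := toEuclideanLin A)
    (fun i => ?_) fun x hx => ?_
  · rw [toLpLin_apply, hA.mulVec_eigenvectorBasis]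
    rfl
  · obtain ⟨y, hy, rfl⟩ := Submodule.mem_map.mp hx
    have := hW y hy
    rw [← real_inner_self_eq_norm_sq, toLpLin_apply, EuclideanSpace.inner_eq_star_dotProduct,
      EuclideanSpace.inner_eq_star_dotProduct]
    simpa [e, dotProduct_comm y] using this

theorem Antitone.le_apply_of_lt_card_filter_le {α : Type*} [LinearOrder α] {N : ℕ}
    {g : Fin N → α} (hg : Antitone g) {c : α} {k : Fin N} (hk : k < #{i | c ≤ g i}) : c ≤ g k := by
  by_contra! hgk
  have hsub : ({i | c ≤ g i} : Finset (Fin N)) ⊆ Iio k := fun i hi => by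
    by_contra! hki
    exact (mem_filter.mp hi).2.not_gt ((hg (not_lt.mp (by simpa using hki))).trans_lt hgk)
  have := card_le_card hsub
  rw [Fin.card_Iio] at this
  omega

theorem card_filter_eq_of_map_univ_eq {α β γ : Type*} [Fintype α] [Fintype β] {f : α → γ}
    {g : β → γ} (h : univ.val.map f = univ.val.map g) (P : γ → Prop) [DecidablePred P] :
    #{i | P (f i)} = #{j | P (g j)} := by
  simpa [Multiset.countP_map, Finset.card, Finset.filter_val] using
    congrArg (Multiset.countP P) h

section Blockwise

variable {V ι : Type*} [Fintype V] [DecidableEq V] [DecidableEq ι] {A : Matrix V V ℝ}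
  {p : V → ι} {F : ι → ℝ}

theorem mulVec_comp_apply_of_blockwise
    (hA : ∀ u v, F (p u) ≠ 0 → F (p v) ≠ 0 → A u v = if u ≠ v ∧ p u = p v then 2 else 0)
    {u : V} (hu : F (p u) ≠ 0) :
    (A *ᵥ (F ∘ p)) u = 2 * (#{v | p v = p u} - 1 : ℝ) * F (p u) := by
  have hterm : ∀ v, A u v * F (p v) = if v ≠ u ∧ p v = p u then 2 * F (p u) else 0 := by
    intro v
    by_cases hv : F (p v) = 0
    · rw [hv, mul_zero, eq_comm, ite_eq_right_iff]
      rintro ⟨-, huv⟩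
      exact absurd (huv ▸ hv) hu
    · rw [hA u v hu hv]
      by_cases h : p v = p u <;> by_cases h' : v = u <;> simp_all [eq_comm]
  have hmem : u ∈ ({v | p v = p u} : Finset V) := by simp
  have hcard : #{v | v ≠ u ∧ p v = p u} = #{v | p v = p u} - 1 := by
    rw [← card_erase_of_mem hmem]
    congr 1
    ext v
    simp [and_comm]
  rw [mulVec, dotProduct]
  simp only [Function.comp_apply, hterm, sum_ite, sum_const_zero, add_zero, sum_const, nsmul_eq_mul]
  rw [hcard, Nat.cast_sub (card_pos.mpr ⟨u, hmem⟩)]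
  push_cast
  ring

theorem le_dotProduct_mulVec_comp_of_blockwise
    (hA : ∀ u v, F (p u) ≠ 0 → F (p v) ≠ 0 → A u v = if u ≠ v ∧ p u = p v then 2 else 0)
    {m : ℕ} (hm : ∀ i, F i ≠ 0 → m ≤ #{v | p v = i}) :
    (2 * m - 2) * ((F ∘ p) ⬝ᵥ (F ∘ p)) ≤ (F ∘ p) ⬝ᵥ (A *ᵥ (F ∘ p)) := by
  rw [dotProduct, dotProduct, mul_sum]
  refine sum_le_sum fun u _ => ?_
  by_cases hu : F (p u) = 0
  · simp [hu]
  · have : (m : ℝ) ≤ #{v | p v = p u} := by exact_mod_cast hm _ hu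
    rw [mulVec_comp_apply_of_blockwise hA hu, Function.comp_apply]
    nlinarith [sq_nonneg (F (p u))]

theorem Matrix.IsHermitian.card_le_card_filter_le_eigenvalues_of_blockwise (hA : A.IsHermitian)
    {s : Finset ι} {m : ℕ} (hm : 0 < m)
    (hAs : ∀ u v, p u ∈ s → p v ∈ s → A u v = if u ≠ v ∧ p u = p v then 2 else 0)
    (hs : ∀ i ∈ s, m ≤ #{v | p v = i}) :
    #s ≤ #{j | 2 * m - 2 ≤ hA.eigenvalues j} := by
  let χ : s → V → ℝ := fun i v => if p v = i then 1 else 0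
  have hχ : LinearIndependent ℝ χ := by
    refine Fintype.linearIndependent_iff.mpr fun c hc i => ?_
    obtain ⟨v, -, hv⟩ := filter_nonempty_iff.mp (card_pos.mp (hm.trans_le (hs i i.2)))
    simpa [χ, hv, Subtype.val_inj] using congrFun hc v
  have hrank : finrank ℝ (Submodule.span ℝ (Set.range χ)) = #s := by
    rw [finrank_span_eq_card hχ, Fintype.card_coe]
  rw [← hrank]
  refine hA.finrank_le_card_filter_le_eigenvalues fun y hy => ?_
  obtain ⟨c, rfl⟩ := (Submodule.mem_span_range_iff_exists_fun ℝ).mp hy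
  let F : ι → ℝ := fun i => ∑ j : s, if i = j then c j else 0
  have hF : ∀ i, F i ≠ 0 → i ∈ s := fun i => not_imp_comm.mp fun hi =>
    sum_eq_zero fun j _ => if_neg fun (h : i = j) => hi (h ▸ j.2)
  have hy : ∑ j, c j • χ j = F ∘ p := by
    ext v
    simp [F, χ]
  rw [hy]
  exact le_dotProduct_mulVec_comp_of_blockwise (fun u v hu hv => hAs u v (hF _ hu) (hF _ hv))
    fun i hi => hs i (hF i hi)

end Blockwise

theorem antiAdj_apply_of_ecc_eq_two {V : Type*} [Fintype V] {G : SimpleGraph V} {u v : V}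
    (hu : ecc G u = 2) (hv : ecc G v = 2) :
    antiAdj G u v = if G.dist u v = 2 then 2 else 0 := by
  simp only [antiAdj, of_apply, hu, hv, min_self]
  split_ifs with h <;> simp [h]

def SimpleGraph.IsCompleteMultipartiteWith {V ι : Type*} (G : SimpleGraph V) (p : V → ι) :
    Prop :=
  ∀ u v, G.Adj u v ↔ p u ≠ p v

namespace SimpleGraph.IsCompleteMultipartiteWith

variable {V ι : Type*} {G : SimpleGraph V} {p : V → ι} (hG : G.IsCompleteMultipartiteWith p)
  {u v w : V}
include hG

theorem dist_eq_one (h : p u ≠ p v) : G.dist u v = 1 :=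
  dist_eq_one_iff_adj.mpr ((hG u v).mpr h)

theorem dist_eq_two (huv : u ≠ v) (h : p u = p v) (hw : p w ≠ p u) : G.dist u v = 2 := by
  have huw : G.Adj u w := (hG u w).mpr hw.symm
  have hwv : G.Adj w v := (hG w v).mpr (h ▸ hw)
  have hle : G.dist u v ≤ 2 := dist_le (.cons huw (.cons hwv .nil))
  have hne0 : G.dist u v ≠ 0 :=
    dist_ne_zero_iff_ne_and_reachable.mpr ⟨huv, huw.reachable.trans hwv.reachable⟩
  have hne1 : G.dist u v ≠ 1 := fun h1 => (hG u v).mp (dist_eq_one_iff_adj.mp h1) h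
  omega

theorem ecc_eq_two [Fintype V] (hu : v ≠ u) (hpu : p v = p u) (hw : p w ≠ p u) :
    ecc G u = 2 := by
  refine le_antisymm (Finset.sup_le fun x _ => ?_) ?_
  · rcases eq_or_ne x u with rfl | hxu
    · simp
    by_cases hpx : p u = p x
    · exact (hG.dist_eq_two hxu.symm hpx hw).le
    · exact (hG.dist_eq_one hpx).trans_le one_le_two
  · exact (hG.dist_eq_two hu.symm hpu.symm hw).ge.trans (le_sup (mem_univ v))

theorem antiAdj_apply [Fintype V] [DecidableEq V] [DecidableEq ι] (hu : ecc G u = 2)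
    (hv : ecc G v = 2) (hw : p w ≠ p u) :
    antiAdj G u v = if u ≠ v ∧ p u = p v then 2 else 0 := by
  rw [antiAdj_apply_of_ecc_eq_two hu hv]
  by_cases huv : u = v
  · simp [huv]
  by_cases h : p u = p v
  · simp [hG.dist_eq_two huv h hw, huv, h]
  · simp [hG.dist_eq_one h, h]

theorem card_le_card_filter_le_antiAdj_eigenvalues [Fintype V] [DecidableEq V] [DecidableEq ι]
    (hH : (antiAdj G).IsHermitian) {s : Finset ι} (hw : p w ∉ s) {m : ℕ} (hm : 2 ≤ m)
    (hs : ∀ i ∈ s, m ≤ #{v | p v = i}) :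
    #s ≤ #{j | 2 * m - 2 ≤ hH.eigenvalues j} := by
  have hout : ∀ u, p u ∈ s → p w ≠ p u := fun u hu h => hw (h ▸ hu)
  have hecc : ∀ u, p u ∈ s → ecc G u = 2 := fun u hu => by
    obtain ⟨v, hv, hvu⟩ := exists_mem_ne (one_lt_two.trans_le (hm.trans (hs _ hu))) u
    exact hG.ecc_eq_two hvu (mem_filter.mp hv).2 (hout u hu)
  exact hH.card_le_card_filter_le_eigenvalues_of_blockwise (by omega)
    (fun u v hu hv => hG.antiAdj_apply (hecc u hu) (hecc v hv) (hout u hu)) hs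

end SimpleGraph.IsCompleteMultipartiteWith

/-- For `G = K₁ ∨ K_{n₁,n₂,n₃}` with `n₁ ≥ n₂ ≥ n₃ ≥ 2` (which is the complete 4-partite
graph with one part of size `1`, given by a part function `p`), the three largest
anti-adjacency eigenvalues `ξ₁ ≥ ξ₂ ≥ ξ₃` satisfy `ξ₁ ≥ 2n₁ − 2`, `ξ₂ ≥ 2n₂ − 2` and
`ξ₃ ≥ 2n₃ − 2`; in particular `G` has at least three strictly positive anti-adjacency
eigenvalues. -/
theorem antiAdj_three_positive_eigenvalues_join_K1_completeTripartite
    {V : Type*} [Fintype V] [DecidableEq V] {n₁ n₂ n₃ : ℕ}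
    (hn₁₂ : n₂ ≤ n₁) (hn₂₃ : n₃ ≤ n₂) (hn₃ : 2 ≤ n₃)
    (p : V → Fin 4)
    (h0 : (Finset.univ.filter (fun v => p v = 0)).card = 1)
    (h1 : (Finset.univ.filter (fun v => p v = 1)).card = n₁)
    (h2 : (Finset.univ.filter (fun v => p v = 2)).card = n₂)
    (h3 : (Finset.univ.filter (fun v => p v = 3)).card = n₃)
    (hcard : Fintype.card V = 1 + n₁ + n₂ + n₃)
    (G : SimpleGraph V) (hGadj : ∀ u v, G.Adj u v ↔ p u ≠ p v)
    (hH : (antiAdj G).IsHermitian)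
    (g : Fin (Fintype.card V) → ℝ) (hg : Antitone g)
    (hgspec : (Finset.univ.val.map g) = Finset.univ.val.map hH.eigenvalues) :
    2 * (n₁ : ℝ) - 2 ≤ g ⟨0, by omega⟩ ∧
      2 * (n₂ : ℝ) - 2 ≤ g ⟨1, by omega⟩ ∧
      2 * (n₃ : ℝ) - 2 ≤ g ⟨2, by omega⟩ := by
  have hG : G.IsCompleteMultipartiteWith p := hGadj
  obtain ⟨w₀, hw₀⟩ := card_pos.mp (h0 ▸ Nat.one_pos)
  have hpw₀ : p w₀ = 0 := (mem_filter.mp hw₀).2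
  have key : ∀ (s : Finset (Fin 4)) (m : ℕ) (k : Fin (Fintype.card V)), 0 ∉ s → 2 ≤ m →
      (∀ i ∈ s, m ≤ #{v | p v = i}) → (k : ℕ) < #s → 2 * (m : ℝ) - 2 ≤ g k :=
    fun s m k hs0 hm hs hk => hg.le_apply_of_lt_card_filter_le <| by
      rw [card_filter_eq_of_map_univ_eq hgspec]
      exact hk.trans_le (hG.card_le_card_filter_le_antiAdj_eigenvalues hH (hpw₀ ▸ hs0) hm hs)
  refine ⟨key {1} n₁ _ (by decide) (by omega) ?_ (by simp),
    key {1, 2} n₂ _ (by decide) (by omega) ?_ (by simp),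
    key {1, 2, 3} n₃ _ (by decide) hn₃ ?_ (by simp)⟩ <;> simp [h1, h2, h3] <;> omega
end
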